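/- Let n ∈ ℕ and let T₁₁, T₁₂, T₂₁, T₂₂ : [0,1]⁴ → Matrix(n,n,ℝ) be continuously differentiable in their first two arguments, with continuous mixed partial derivatives ∂ₓ∂ᵧT_{ij}. Assume the boundary-matching conditions: T₁ⱼ(x,y,x,η) = T₂ⱼ(x,y,x,η) for all x, y, η ∈ [0,1] and j ∈ {1,2}, and ∂ₓT_{i1}(x,y,θ,y) = ∂ₓT_{i2}(x,y,θ,y) for all x, y, θ ∈ [0,1] and i ∈ {1,2}. For a continuous v : [0,1]² → ℝⁿ define (𝒯v)(x,y) := ∫₀ˣ∫₀ʸ T₁₁(x,y,θ,η)v(θ,η)dη dθ + ∫ₓ¹∫₀ʸ T₂₁(x,y,θ,η)v(θ,η)dη dθ + ∫₀ˣ∫ᵧ¹ T₁₂(x,y,θ,η)v(θ,η)dη dθ + ∫ₓ¹∫ᵧ¹ T₂₂(x,y,θ,η)v(θ,η)dη dθ. Then for every continuous v and every (x,y) ∈ (0,1) × (0,1), the mixed partial derivative ∂ᵧ∂ₓ(𝒯v)(x,y) exists and equals ∫₀ˣ∫₀ʸ ∂ₓ∂ᵧT₁₁(x,y,θ,η)v(θ,η)dη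 dθ + ∫ₓ¹∫₀ʸ ∂ₓ∂ᵧT₂₁(x,y,θ,η)v(θ,η)dη dθ + ∫₀ˣ∫ᵧ¹ ∂ₓ∂ᵧT₁₂(x,y,θ,η)v(θ,η)dη dθ + ∫ₓ¹∫ᵧ¹ ∂ₓ∂ᵧT₂₂(x,y,θ,η)v(θ,η)dη dθ. -/

import Mathlib

open MeasureTheory

attribute [local instance] Matrix.normedAddCommGroup Matrix.normedSpace

open intervalIntegral Set Metric

set_option linter.unusedSectionVars false

section Helpers

variable {E : Type*} [NormedAddCommGroup E] [NormedSpace ℝ E] [CompleteSpace E]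

/-- Fubini for interval integrals of (jointly) continuous functions. -/
lemma my_intervalIntegral_swap (f : ℝ → ℝ → E)
    (hf : Continuous fun p : ℝ × ℝ => f p.1 p.2) (a b c d : ℝ) :
    ∫ θ in a..b, ∫ η in c..d, f θ η = ∫ η in c..d, ∫ θ in a..b, f θ η := by
  have key : ∀ (s t : Set ℝ), MeasurableSet s → MeasurableSet t →
      s ⊆ Icc (min a b) (max a b) → t ⊆ Icc (min c d) (max c d) →
      ∫ θ in s, ∫ η in t, f θ η = ∫ η in t, ∫ θ in s, f θ η := by
    intro s t hs ht hs' ht'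
    have hint : Integrable (Function.uncurry f)
        ((volume.restrict s).prod (volume.restrict t)) := by
      rw [Measure.prod_restrict]
      have h1 : IntegrableOn (Function.uncurry f)
          (Icc (min a b) (max a b) ×ˢ Icc (min c d) (max c d)) :=
        hf.continuousOn.integrableOn_compact (isCompact_Icc.prod isCompact_Icc)
      exact h1.mono_set (Set.prod_mono hs' ht')
    exact MeasureTheory.integral_integral_swap hint
  have h1 : Set.uIoc a b ⊆ Icc (min a b) (max a b) := Set.Ioc_subset_Icc_self
  have h2 : Set.uIoc c d ⊆ Icc (min c d) (max c d) := Set.Ioc_subset_Icc_self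
  rw [intervalIntegral_eq_integral_uIoc]
  have : ∀ θ, ∫ η in c..d, f θ η
      = (if c ≤ d then (1:ℝ) else -1) • ∫ η in Set.uIoc c d, f θ η := fun θ => by
    rw [intervalIntegral_eq_integral_uIoc]
  simp_rw [this]
  rw [MeasureTheory.integral_smul, key _ _ measurableSet_uIoc measurableSet_uIoc h1 h2]
  rw [intervalIntegral_eq_integral_uIoc]
  have : ∀ η, ∫ θ in a..b, f θ η
      = (if a ≤ b then (1:ℝ) else -1) • ∫ θ in Set.uIoc a b, f θ η := fun η => by
    rw [intervalIntegral_eq_integral_uIoc]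
  simp_rw [this]
  rw [MeasureTheory.integral_smul, smul_comm]

variable {E : Type*} [NormedAddCommGroup E] [NormedSpace ℝ E] [CompleteSpace E]

/-- Derivative of `s ↦ ∫_x^s f s θ dθ` at `x` is `f x x`. -/
lemma my_hasDerivAt_moving (f : ℝ → ℝ → E)
    (hf : Continuous fun p : ℝ × ℝ => f p.1 p.2) (x : ℝ) :
    HasDerivAt (fun s => ∫ θ in x..s, f s θ) (f x x) x := by
  rw [hasDerivAt_iff_isLittleO, Asymptotics.isLittleO_iff]
  intro c hc
  have hcont : ContinuousAt (fun p : ℝ × ℝ => f p.1 p.2) (x, x) := hf.continuousAt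
  rw [Metric.continuousAt_iff] at hcont
  obtain ⟨δ, hδ, hδ'⟩ := hcont c hc
  filter_upwards [Metric.ball_mem_nhds x hδ] with s hs
  have hsx : |s - x| < δ := by simpa [Real.dist_eq] using hs
  have hint1 : IntervalIntegrable (fun θ => f s θ) volume x s :=
    (hf.comp (continuous_const.prodMk continuous_id)).intervalIntegrable x s
  have h0 : (∫ θ in x..x, f x θ) = 0 := integral_same
  have hconst : (s - x) • f x x = ∫ θ in x..s, f x x := by
    rw [intervalIntegral.integral_const]
  rw [h0, sub_zero, hconst,
    ← intervalIntegral.integral_sub hint1 (intervalIntegrable_const)]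
  have hbound : ∀ θ ∈ Set.uIoc x s, ‖f s θ - f x x‖ ≤ c := by
    intro θ hθ
    have hθ' : |θ - x| ≤ |s - x| := by
      rcases le_total x s with h | h
      · rw [uIoc_of_le h] at hθ
        rw [abs_of_nonneg (by linarith [hθ.1]), abs_of_nonneg (by linarith)]
        linarith [hθ.2]
      · rw [uIoc_of_ge h] at hθ
        rw [abs_of_nonpos (by linarith [hθ.2]), abs_of_nonpos (by linarith)]
        linarith [hθ.1]
    have : dist ((s, θ) : ℝ × ℝ) (x, x) < δ := by
      rw [Prod.dist_eq]
      exact max_lt (by simpa [Real.dist_eq] using hsx)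
        (lt_of_le_of_lt (by simpa [Real.dist_eq] using hθ') hsx)
    have := hδ' this
    rw [dist_eq_norm] at this
    exact this.le
  calc ‖∫ θ in x..s, (f s θ - f x x)‖ ≤ c * |s - x| :=
        intervalIntegral.norm_integral_le_of_norm_le_const hbound
    _ = c * ‖s - x‖ := by rw [Real.norm_eq_abs]

/-- Differentiation under the interval integral sign, fixed endpoints,
for globally continuous data with derivatives on an open set. -/
lemma my_hasDerivAt_param (F F' : ℝ → ℝ → E)
    (hF : Continuous fun p : ℝ × ℝ => F p.1 p.2)
    (hF' : Continuous fun p : ℝ × ℝ => F' p.1 p.2)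
    {U : Set ℝ} (hU : IsOpen U)
    (hd : ∀ s ∈ U, ∀ η, HasDerivAt (fun u => F u η) (F' s η) s)
    (a b : ℝ) {x : ℝ} (hx : x ∈ U) :
    HasDerivAt (fun s => ∫ η in a..b, F s η) (∫ η in a..b, F' x η) x := by
  obtain ⟨ε, εpos, hball⟩ := Metric.isOpen_iff.1 hU x hx
  obtain ⟨C, hC⟩ := ((isCompact_closedBall x (ε/2)).prod isCompact_uIcc).exists_bound_of_continuousOn
    (hF'.continuousOn (s := closedBall x (ε/2) ×ˢ uIcc a b))
  refine (intervalIntegral.hasDerivAt_integral_of_dominated_loc_of_deriv_le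
    (F := F) (F' := F') (bound := fun _ => C) (ball_mem_nhds x (half_pos εpos))
    (Filter.Eventually.of_forall fun s =>
      ((hF.comp (continuous_const.prodMk continuous_id)).aestronglyMeasurable))
    ((hF.comp (continuous_const.prodMk continuous_id)).intervalIntegrable a b)
    ((hF'.comp (continuous_const.prodMk continuous_id)).aestronglyMeasurable)
    (Filter.Eventually.of_forall fun η hη s hs => ?_)
    (intervalIntegrable_const)
    (Filter.Eventually.of_forall fun η hη s hs => ?_)).2
  · exact hC (s, η) ⟨ball_subset_closedBall hs, uIoc_subset_uIcc hη⟩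
  · refine hd s (hball ?_) η
    exact ball_subset_ball (by linarith) hs
lemma my_main (f g f' g' : ℝ → ℝ → E)
    (hf : Continuous fun p : ℝ × ℝ => f p.1 p.2)
    (hg : Continuous fun p : ℝ × ℝ => g p.1 p.2)
    (hf' : Continuous fun p : ℝ × ℝ => f' p.1 p.2)
    (hg' : Continuous fun p : ℝ × ℝ => g' p.1 p.2)
    (hdf : ∀ s ∈ Set.Ioo (0:ℝ) 1, ∀ θ, HasDerivAt (fun u => f u θ) (f' s θ) s)
    (hdg : ∀ s ∈ Set.Ioo (0:ℝ) 1, ∀ θ, HasDerivAt (fun u => g u θ) (g' s θ) s)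
    {x : ℝ} (hx : x ∈ Set.Ioo (0:ℝ) 1) (hfg : f x x = g x x) :
    HasDerivAt (fun s => (∫ θ in (0:ℝ)..s, f s θ) + ∫ θ in s..(1:ℝ), g s θ)
      ((∫ θ in (0:ℝ)..x, f' x θ) + ∫ θ in x..(1:ℝ), g' x θ) x := by
  have h1 : HasDerivAt (fun s => ∫ θ in (0:ℝ)..x, f s θ) (∫ θ in (0:ℝ)..x, f' x θ) x :=
    my_hasDerivAt_param f f' hf hf' isOpen_Ioo hdf 0 x hx
  have h2 : HasDerivAt (fun s => ∫ θ in x..s, f s θ) (f x x) x :=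
    my_hasDerivAt_moving f hf x
  have h3 : HasDerivAt (fun s => ∫ θ in x..(1:ℝ), g s θ) (∫ θ in x..(1:ℝ), g' x θ) x :=
    my_hasDerivAt_param g g' hg hg' isOpen_Ioo hdg x 1 hx
  have h4 : HasDerivAt (fun s => ∫ θ in x..s, g s θ) (g x x) x :=
    my_hasDerivAt_moving g hg x
  have h := (h1.add h2).add (h3.sub h4)
  have heq : (fun s => ((∫ θ in (0:ℝ)..x, f s θ) + ∫ θ in x..s, f s θ)
      + ((∫ θ in x..(1:ℝ), g s θ) - ∫ θ in x..s, g s θ))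
      = fun s => (∫ θ in (0:ℝ)..s, f s θ) + ∫ θ in s..(1:ℝ), g s θ := by
    funext s
    have if1 : ∀ a b : ℝ, IntervalIntegrable (fun θ => f s θ) volume a b := fun a b =>
      (hf.comp (continuous_const.prodMk continuous_id)).intervalIntegrable a b
    have ig1 : ∀ a b : ℝ, IntervalIntegrable (fun θ => g s θ) volume a b := fun a b =>
      (hg.comp (continuous_const.prodMk continuous_id)).intervalIntegrable a b
    rw [integral_add_adjacent_intervals (if1 0 x) (if1 x s)]
    have : (∫ θ in x..s, g s θ) + ∫ θ in s..(1:ℝ), g s θ = ∫ θ in x..(1:ℝ), g s θ :=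
      integral_add_adjacent_intervals (ig1 x s) (ig1 s 1)
    have : (∫ θ in s..(1:ℝ), g s θ) = (∫ θ in x..(1:ℝ), g s θ) - ∫ θ in x..s, g s θ := by
      rw [← this]; abel
    rw [this]
  change HasDerivAt (fun s => ((∫ θ in (0:ℝ)..x, f s θ) + ∫ θ in x..s, f s θ)
      + ((∫ θ in x..(1:ℝ), g s θ) - ∫ θ in x..s, g s θ)) _ x at h
  rw [heq] at h
  have hval : (∫ θ in (0:ℝ)..x, f' x θ) + f x x
      + ((∫ θ in x..(1:ℝ), g' x θ) - g x x)
      = (∫ θ in (0:ℝ)..x, f' x θ) + ∫ θ in x..(1:ℝ), g' x θ := by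
    rw [hfg]; abel
  rwa [hval] at h

attribute [local instance] Matrix.normedAddCommGroup Matrix.normedSpace

noncomputable def clamp (r : ℝ) : ℝ := max 0 (min 1 r)

lemma clamp_mem (r : ℝ) : clamp r ∈ Set.Icc (0:ℝ) 1 :=
  ⟨le_max_left _ _, max_le (by norm_num) (min_le_left _ _)⟩

lemma clamp_eq {r : ℝ} (h : r ∈ Set.Icc (0:ℝ) 1) : clamp r = r := by
  simp only [clamp, min_eq_right h.2, max_eq_right h.1]

lemma continuous_clamp : Continuous clamp :=
  continuous_const.max (continuous_const.min continuous_id)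

lemma HasDerivAt.matrix_mulVec_const {n : ℕ} {M : ℝ → Matrix (Fin n) (Fin n) ℝ}
    {M' : Matrix (Fin n) (Fin n) ℝ} {x : ℝ} (h : HasDerivAt M M' x) (w : Fin n → ℝ) :
    HasDerivAt (fun s => (M s).mulVec w) (M'.mulVec w) x := by
  let L : Matrix (Fin n) (Fin n) ℝ →L[ℝ] (Fin n → ℝ) :=
    LinearMap.toContinuousLinearMap
      { toFun := fun A => A.mulVec w
        map_add' := fun A B => Matrix.add_mulVec A B w
        map_smul' := fun r A => Matrix.smul_mulVec r A w }
  have := L.hasFDerivAt.comp_hasDerivAt x h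
  exact this

/-- The clamped integrand. -/
noncomputable def qker {n : ℕ} (T : ℝ → ℝ → ℝ → ℝ → Matrix (Fin n) (Fin n) ℝ)
    (v : ℝ → ℝ → Fin n → ℝ) (a b θ η : ℝ) : Fin n → ℝ :=
  (T (clamp a) (clamp b) (clamp θ) (clamp η)).mulVec (v (clamp θ) (clamp η))

lemma qker_continuous {n : ℕ} {T : ℝ → ℝ → ℝ → ℝ → Matrix (Fin n) (Fin n) ℝ}
    {v : ℝ → ℝ → Fin n → ℝ}
    (hT : ContinuousOn (fun p : ℝ × ℝ × ℝ × ℝ => T p.1 p.2.1 p.2.2.1 p.2.2.2)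
      (Set.Icc 0 1 ×ˢ Set.Icc 0 1 ×ˢ Set.Icc 0 1 ×ˢ Set.Icc 0 1))
    (hv : ContinuousOn (fun p : ℝ × ℝ => v p.1 p.2) (Set.Icc 0 1 ×ˢ Set.Icc 0 1)) :
    Continuous fun q : ℝ × ℝ × ℝ × ℝ => qker T v q.1 q.2.1 q.2.2.1 q.2.2.2 := by
  unfold qker
  have h1 : Continuous fun q : ℝ × ℝ × ℝ × ℝ =>
      T (clamp q.1) (clamp q.2.1) (clamp q.2.2.1) (clamp q.2.2.2) := by
    have hmap : Continuous fun q : ℝ × ℝ × ℝ × ℝ =>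
        ((clamp q.1, clamp q.2.1, clamp q.2.2.1, clamp q.2.2.2) : ℝ × ℝ × ℝ × ℝ) :=
      (continuous_clamp.comp continuous_fst).prodMk
        ((continuous_clamp.comp (continuous_fst.comp continuous_snd)).prodMk
          ((continuous_clamp.comp
            (continuous_fst.comp (continuous_snd.comp continuous_snd))).prodMk
            (continuous_clamp.comp
              (continuous_snd.comp (continuous_snd.comp continuous_snd)))))
    exact hT.comp_continuous hmap
      (fun q => ⟨clamp_mem _, clamp_mem _, clamp_mem _, clamp_mem _⟩)
  have h2 : Continuous fun q : ℝ × ℝ × ℝ × ℝ => v (clamp q.2.2.1) (clamp q.2.2.2) := by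
    have hmap2 : Continuous fun q : ℝ × ℝ × ℝ × ℝ =>
        ((clamp q.2.2.1, clamp q.2.2.2) : ℝ × ℝ) :=
      (continuous_clamp.comp
        (continuous_fst.comp (continuous_snd.comp continuous_snd))).prodMk
        (continuous_clamp.comp (continuous_snd.comp (continuous_snd.comp continuous_snd)))
    exact hv.comp_continuous hmap2 (fun q => ⟨clamp_mem _, clamp_mem _⟩)
  exact Continuous.matrix_mulVec
    (A := fun q : ℝ × ℝ × ℝ × ℝ => T (clamp q.1) (clamp q.2.1) (clamp q.2.2.1) (clamp q.2.2.2))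
    (B := fun q : ℝ × ℝ × ℝ × ℝ => v (clamp q.2.2.1) (clamp q.2.2.2)) h1 h2

lemma qker_eq {n : ℕ} (T : ℝ → ℝ → ℝ → ℝ → Matrix (Fin n) (Fin n) ℝ)
    (v : ℝ → ℝ → Fin n → ℝ) {a b θ η : ℝ} (ha : a ∈ Set.Icc (0:ℝ) 1)
    (hb : b ∈ Set.Icc (0:ℝ) 1) (hθ : θ ∈ Set.Icc (0:ℝ) 1) (hη : η ∈ Set.Icc (0:ℝ) 1) :
    qker T v a b θ η = (T a b θ η).mulVec (v θ η) := by
  simp only [qker, clamp_eq ha, clamp_eq hb, clamp_eq hθ, clamp_eq hη]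

lemma qker_hasDerivAt_fst {n : ℕ} {T T' : ℝ → ℝ → ℝ → ℝ → Matrix (Fin n) (Fin n) ℝ}
    {v : ℝ → ℝ → Fin n → ℝ}
    (hdT : ∀ x ∈ Set.Ioo (0:ℝ) 1, ∀ y ∈ Set.Icc (0:ℝ) 1, ∀ θ ∈ Set.Icc (0:ℝ) 1,
      ∀ η ∈ Set.Icc (0:ℝ) 1,
      HasDerivAt (fun s => T s y θ η) (T' x y θ η) x)
    {s : ℝ} (hs : s ∈ Set.Ioo (0:ℝ) 1) (b θ η : ℝ) :
    HasDerivAt (fun u => qker T v u b θ η) (qker T' v s b θ η) s := by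
  have hs' : s ∈ Set.Icc (0:ℝ) 1 := Set.mem_Icc_of_Ioo hs
  have hd : HasDerivAt (fun u => (T u (clamp b) (clamp θ) (clamp η)).mulVec
      (v (clamp θ) (clamp η)))
      ((T' s (clamp b) (clamp θ) (clamp η)).mulVec (v (clamp θ) (clamp η))) s :=
    (hdT s hs (clamp b) (clamp_mem _) (clamp θ) (clamp_mem _) (clamp η)
      (clamp_mem _)).matrix_mulVec_const _
  have heq : (fun u => qker T v u b θ η) =ᶠ[nhds s]
      fun u => (T u (clamp b) (clamp θ) (clamp η)).mulVec (v (clamp θ) (clamp η)) := by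
    filter_upwards [Ioo_mem_nhds hs.1 hs.2] with u hu
    simp only [qker, clamp_eq (Set.mem_Icc_of_Ioo hu)]
  have hval : qker T' v s b θ η
      = (T' s (clamp b) (clamp θ) (clamp η)).mulVec (v (clamp θ) (clamp η)) := by
    simp only [qker, clamp_eq hs']
  rw [hval]
  exact hd.congr_of_eventuallyEq heq

lemma qker_hasDerivAt_snd {n : ℕ} {T T' : ℝ → ℝ → ℝ → ℝ → Matrix (Fin n) (Fin n) ℝ}
    {v : ℝ → ℝ → Fin n → ℝ}
    (hdT : ∀ x ∈ Set.Icc (0:ℝ) 1, ∀ y ∈ Set.Ioo (0:ℝ) 1, ∀ θ ∈ Set.Icc (0:ℝ) 1,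
      ∀ η ∈ Set.Icc (0:ℝ) 1,
      HasDerivAt (fun t => T x t θ η) (T' x y θ η) y)
    {t : ℝ} (ht : t ∈ Set.Ioo (0:ℝ) 1) (a θ η : ℝ) :
    HasDerivAt (fun u => qker T v a u θ η) (qker T' v a t θ η) t := by
  have ht' : t ∈ Set.Icc (0:ℝ) 1 := Set.mem_Icc_of_Ioo ht
  have hd : HasDerivAt (fun u => (T (clamp a) u (clamp θ) (clamp η)).mulVec
      (v (clamp θ) (clamp η)))
      ((T' (clamp a) t (clamp θ) (clamp η)).mulVec (v (clamp θ) (clamp η))) t :=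
    (hdT (clamp a) (clamp_mem _) t ht (clamp θ) (clamp_mem _) (clamp η)
      (clamp_mem _)).matrix_mulVec_const _
  have heq : (fun u => qker T v a u θ η) =ᶠ[nhds t]
      fun u => (T (clamp a) u (clamp θ) (clamp η)).mulVec (v (clamp θ) (clamp η)) := by
    filter_upwards [Ioo_mem_nhds ht.1 ht.2] with u hu
    simp only [qker, clamp_eq (Set.mem_Icc_of_Ioo hu)]
  have hval : qker T' v a t θ η
      = (T' (clamp a) t (clamp θ) (clamp η)).mulVec (v (clamp θ) (clamp η)) := by
    simp only [qker, clamp_eq ht']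
  rw [hval]
  exact hd.congr_of_eventuallyEq heq

/-- Continuity and differentiability of one quadrant block `(σ, τ) ↦ ∫ η in a..b, W σ τ η`. -/
lemma my_block (W W' : ℝ → ℝ → ℝ → E)
    (hW : Continuous fun q : ℝ × ℝ × ℝ => W q.1 q.2.1 q.2.2)
    (hW' : Continuous fun q : ℝ × ℝ × ℝ => W' q.1 q.2.1 q.2.2)
    (hd : ∀ s ∈ Set.Ioo (0:ℝ) 1, ∀ θ η, HasDerivAt (fun u => W u θ η) (W' s θ η) s)
    (a b : ℝ) :
    (Continuous fun p : ℝ × ℝ => ∫ η in a..b, W p.1 p.2 η) ∧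
    (∀ s ∈ Set.Ioo (0:ℝ) 1, ∀ θ,
      HasDerivAt (fun u => ∫ η in a..b, W u θ η) (∫ η in a..b, W' s θ η) s) := by
  constructor
  · exact intervalIntegral.continuous_parametric_intervalIntegral_of_continuous'
      (f := fun (p : ℝ × ℝ) η => W p.1 p.2 η)
      (hW.comp ((continuous_fst.comp continuous_fst).prodMk
        ((continuous_snd.comp continuous_fst).prodMk continuous_snd))) a b
  · intro s hs θ
    exact my_hasDerivAt_param (fun u η => W u θ η) (fun u η => W' u θ η)
      (hW.comp (continuous_fst.prodMk (continuous_const.prodMk continuous_snd)))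
      (hW'.comp (continuous_fst.prodMk (continuous_const.prodMk continuous_snd)))
      isOpen_Ioo (fun u hu η => hd u hu θ η) a b hs

lemma my_cont_block (W : ℝ → ℝ → ℝ → E)
    (hW : Continuous fun q : ℝ × ℝ × ℝ => W q.1 q.2.1 q.2.2) (a b : ℝ) :
    Continuous fun p : ℝ × ℝ => ∫ η in a..b, W p.1 p.2 η :=
  intervalIntegral.continuous_parametric_intervalIntegral_of_continuous'
    (f := fun (p : ℝ × ℝ) η => W p.1 p.2 η)
    (hW.comp ((continuous_fst.comp continuous_fst).prodMk
      ((continuous_snd.comp continuous_fst).prodMk continuous_snd))) a b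

end Helpers
/-- The quadrant-integral 2D PI operator with kernels `T₁₁, T₁₂, T₂₁, T₂₂`. -/
noncomputable def quadOp {n : ℕ}
    (T₁₁ T₁₂ T₂₁ T₂₂ : ℝ → ℝ → ℝ → ℝ → Matrix (Fin n) (Fin n) ℝ)
    (v : ℝ → ℝ → Fin n → ℝ) (x y : ℝ) : Fin n → ℝ :=
  (∫ θ in (0:ℝ)..x, ∫ η in (0:ℝ)..y, (T₁₁ x y θ η).mulVec (v θ η))
  + (∫ θ in x..(1:ℝ), ∫ η in (0:ℝ)..y, (T₂₁ x y θ η).mulVec (v θ η))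
  + (∫ θ in (0:ℝ)..x, ∫ η in y..(1:ℝ), (T₁₂ x y θ η).mulVec (v θ η))
  + (∫ θ in x..(1:ℝ), ∫ η in y..(1:ℝ), (T₂₂ x y θ η).mulVec (v θ η))

/-- Mixed first-order differentiation rule for 2D PI operators: under the
boundary-matching conditions `T₁ⱼ(x,y,x,η) = T₂ⱼ(x,y,x,η)` and
`∂ₓT_{i1}(x,y,θ,y) = ∂ₓT_{i2}(x,y,θ,y)`, both Leibniz boundary terms cancel and
the mixed derivative `∂ᵧ∂ₓ(𝒯v)(x,y)` exists and is obtained by applying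
`∂ₓ∂ᵧ` to the kernels. -/
theorem quadOp_deriv_xy {n : ℕ}
    (T₁₁ T₁₂ T₂₁ T₂₂ Tx₁₁ Tx₁₂ Tx₂₁ Tx₂₂ Ty₁₁ Ty₁₂ Ty₂₁ Ty₂₂
      Txy₁₁ Txy₁₂ Txy₂₁ Txy₂₂ :
      ℝ → ℝ → ℝ → ℝ → Matrix (Fin n) (Fin n) ℝ)
    (hT₁₁ : ContinuousOn (fun p : ℝ × ℝ × ℝ × ℝ => T₁₁ p.1 p.2.1 p.2.2.1 p.2.2.2)
      (Set.Icc 0 1 ×ˢ Set.Icc 0 1 ×ˢ Set.Icc 0 1 ×ˢ Set.Icc 0 1))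
    (hT₁₂ : ContinuousOn (fun p : ℝ × ℝ × ℝ × ℝ => T₁₂ p.1 p.2.1 p.2.2.1 p.2.2.2)
      (Set.Icc 0 1 ×ˢ Set.Icc 0 1 ×ˢ Set.Icc 0 1 ×ˢ Set.Icc 0 1))
    (hT₂₁ : ContinuousOn (fun p : ℝ × ℝ × ℝ × ℝ => T₂₁ p.1 p.2.1 p.2.2.1 p.2.2.2)
      (Set.Icc 0 1 ×ˢ Set.Icc 0 1 ×ˢ Set.Icc 0 1 ×ˢ Set.Icc 0 1))
    (hT₂₂ : ContinuousOn (fun p : ℝ × ℝ × ℝ × ℝ => T₂₂ p.1 p.2.1 p.2.2.1 p.2.2.2)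
      (Set.Icc 0 1 ×ˢ Set.Icc 0 1 ×ˢ Set.Icc 0 1 ×ˢ Set.Icc 0 1))
    -- the kernels are differentiable in their first argument, with partial
    -- derivatives Tx_ij
    (hdT₁₁ : ∀ x ∈ Set.Icc (0:ℝ) 1, ∀ y ∈ Set.Icc (0:ℝ) 1, ∀ θ ∈ Set.Icc (0:ℝ) 1,
      ∀ η ∈ Set.Icc (0:ℝ) 1,
      HasDerivWithinAt (fun s => T₁₁ s y θ η) (Tx₁₁ x y θ η) (Set.Icc 0 1) x)
    (hdT₁₂ : ∀ x ∈ Set.Icc (0:ℝ) 1, ∀ y ∈ Set.Icc (0:ℝ) 1, ∀ θ ∈ Set.Icc (0:ℝ) 1,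
      ∀ η ∈ Set.Icc (0:ℝ) 1,
      HasDerivWithinAt (fun s => T₁₂ s y θ η) (Tx₁₂ x y θ η) (Set.Icc 0 1) x)
    (hdT₂₁ : ∀ x ∈ Set.Icc (0:ℝ) 1, ∀ y ∈ Set.Icc (0:ℝ) 1, ∀ θ ∈ Set.Icc (0:ℝ) 1,
      ∀ η ∈ Set.Icc (0:ℝ) 1,
      HasDerivWithinAt (fun s => T₂₁ s y θ η) (Tx₂₁ x y θ η) (Set.Icc 0 1) x)
    (hdT₂₂ : ∀ x ∈ Set.Icc (0:ℝ) 1, ∀ y ∈ Set.Icc (0:ℝ) 1, ∀ θ ∈ Set.Icc (0:ℝ) 1,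
      ∀ η ∈ Set.Icc (0:ℝ) 1,
      HasDerivWithinAt (fun s => T₂₂ s y θ η) (Tx₂₂ x y θ η) (Set.Icc 0 1) x)
    -- the partial derivatives are continuous
    (hTx₁₁ : ContinuousOn (fun p : ℝ × ℝ × ℝ × ℝ => Tx₁₁ p.1 p.2.1 p.2.2.1 p.2.2.2)
      (Set.Icc 0 1 ×ˢ Set.Icc 0 1 ×ˢ Set.Icc 0 1 ×ˢ Set.Icc 0 1))
    (hTx₁₂ : ContinuousOn (fun p : ℝ × ℝ × ℝ × ℝ => Tx₁₂ p.1 p.2.1 p.2.2.1 p.2.2.2)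
      (Set.Icc 0 1 ×ˢ Set.Icc 0 1 ×ˢ Set.Icc 0 1 ×ˢ Set.Icc 0 1))
    (hTx₂₁ : ContinuousOn (fun p : ℝ × ℝ × ℝ × ℝ => Tx₂₁ p.1 p.2.1 p.2.2.1 p.2.2.2)
      (Set.Icc 0 1 ×ˢ Set.Icc 0 1 ×ˢ Set.Icc 0 1 ×ˢ Set.Icc 0 1))
    (hTx₂₂ : ContinuousOn (fun p : ℝ × ℝ × ℝ × ℝ => Tx₂₂ p.1 p.2.1 p.2.2.1 p.2.2.2)
      (Set.Icc 0 1 ×ˢ Set.Icc 0 1 ×ˢ Set.Icc 0 1 ×ˢ Set.Icc 0 1))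
    -- the kernels are differentiable in their second argument, with partial
    -- derivatives Ty_ij
    (hdyT₁₁ : ∀ x ∈ Set.Icc (0:ℝ) 1, ∀ y ∈ Set.Icc (0:ℝ) 1, ∀ θ ∈ Set.Icc (0:ℝ) 1,
      ∀ η ∈ Set.Icc (0:ℝ) 1,
      HasDerivWithinAt (fun t => T₁₁ x t θ η) (Ty₁₁ x y θ η) (Set.Icc 0 1) y)
    (hdyT₁₂ : ∀ x ∈ Set.Icc (0:ℝ) 1, ∀ y ∈ Set.Icc (0:ℝ) 1, ∀ θ ∈ Set.Icc (0:ℝ) 1,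
      ∀ η ∈ Set.Icc (0:ℝ) 1,
      HasDerivWithinAt (fun t => T₁₂ x t θ η) (Ty₁₂ x y θ η) (Set.Icc 0 1) y)
    (hdyT₂₁ : ∀ x ∈ Set.Icc (0:ℝ) 1, ∀ y ∈ Set.Icc (0:ℝ) 1, ∀ θ ∈ Set.Icc (0:ℝ) 1,
      ∀ η ∈ Set.Icc (0:ℝ) 1,
      HasDerivWithinAt (fun t => T₂₁ x t θ η) (Ty₂₁ x y θ η) (Set.Icc 0 1) y)
    (hdyT₂₂ : ∀ x ∈ Set.Icc (0:ℝ) 1, ∀ y ∈ Set.Icc (0:ℝ) 1, ∀ θ ∈ Set.Icc (0:ℝ) 1,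
      ∀ η ∈ Set.Icc (0:ℝ) 1,
      HasDerivWithinAt (fun t => T₂₂ x t θ η) (Ty₂₂ x y θ η) (Set.Icc 0 1) y)
    (hTy₁₁ : ContinuousOn (fun p : ℝ × ℝ × ℝ × ℝ => Ty₁₁ p.1 p.2.1 p.2.2.1 p.2.2.2)
      (Set.Icc 0 1 ×ˢ Set.Icc 0 1 ×ˢ Set.Icc 0 1 ×ˢ Set.Icc 0 1))
    (hTy₁₂ : ContinuousOn (fun p : ℝ × ℝ × ℝ × ℝ => Ty₁₂ p.1 p.2.1 p.2.2.1 p.2.2.2)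
      (Set.Icc 0 1 ×ˢ Set.Icc 0 1 ×ˢ Set.Icc 0 1 ×ˢ Set.Icc 0 1))
    (hTy₂₁ : ContinuousOn (fun p : ℝ × ℝ × ℝ × ℝ => Ty₂₁ p.1 p.2.1 p.2.2.1 p.2.2.2)
      (Set.Icc 0 1 ×ˢ Set.Icc 0 1 ×ˢ Set.Icc 0 1 ×ˢ Set.Icc 0 1))
    (hTy₂₂ : ContinuousOn (fun p : ℝ × ℝ × ℝ × ℝ => Ty₂₂ p.1 p.2.1 p.2.2.1 p.2.2.2)
      (Set.Icc 0 1 ×ˢ Set.Icc 0 1 ×ˢ Set.Icc 0 1 ×ˢ Set.Icc 0 1))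
    -- the x-derivatives of the kernels are differentiable in the second
    -- argument, with continuous mixed partial derivatives Txy_ij
    (hdxyT₁₁ : ∀ x ∈ Set.Icc (0:ℝ) 1, ∀ y ∈ Set.Icc (0:ℝ) 1, ∀ θ ∈ Set.Icc (0:ℝ) 1,
      ∀ η ∈ Set.Icc (0:ℝ) 1,
      HasDerivWithinAt (fun t => Tx₁₁ x t θ η) (Txy₁₁ x y θ η) (Set.Icc 0 1) y)
    (hdxyT₁₂ : ∀ x ∈ Set.Icc (0:ℝ) 1, ∀ y ∈ Set.Icc (0:ℝ) 1, ∀ θ ∈ Set.Icc (0:ℝ) 1,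
      ∀ η ∈ Set.Icc (0:ℝ) 1,
      HasDerivWithinAt (fun t => Tx₁₂ x t θ η) (Txy₁₂ x y θ η) (Set.Icc 0 1) y)
    (hdxyT₂₁ : ∀ x ∈ Set.Icc (0:ℝ) 1, ∀ y ∈ Set.Icc (0:ℝ) 1, ∀ θ ∈ Set.Icc (0:ℝ) 1,
      ∀ η ∈ Set.Icc (0:ℝ) 1,
      HasDerivWithinAt (fun t => Tx₂₁ x t θ η) (Txy₂₁ x y θ η) (Set.Icc 0 1) y)
    (hdxyT₂₂ : ∀ x ∈ Set.Icc (0:ℝ) 1, ∀ y ∈ Set.Icc (0:ℝ) 1, ∀ θ ∈ Set.Icc (0:ℝ) 1,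
      ∀ η ∈ Set.Icc (0:ℝ) 1,
      HasDerivWithinAt (fun t => Tx₂₂ x t θ η) (Txy₂₂ x y θ η) (Set.Icc 0 1) y)
    (hTxy₁₁ : ContinuousOn (fun p : ℝ × ℝ × ℝ × ℝ => Txy₁₁ p.1 p.2.1 p.2.2.1 p.2.2.2)
      (Set.Icc 0 1 ×ˢ Set.Icc 0 1 ×ˢ Set.Icc 0 1 ×ˢ Set.Icc 0 1))
    (hTxy₁₂ : ContinuousOn (fun p : ℝ × ℝ × ℝ × ℝ => Txy₁₂ p.1 p.2.1 p.2.2.1 p.2.2.2)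
      (Set.Icc 0 1 ×ˢ Set.Icc 0 1 ×ˢ Set.Icc 0 1 ×ˢ Set.Icc 0 1))
    (hTxy₂₁ : ContinuousOn (fun p : ℝ × ℝ × ℝ × ℝ => Txy₂₁ p.1 p.2.1 p.2.2.1 p.2.2.2)
      (Set.Icc 0 1 ×ˢ Set.Icc 0 1 ×ˢ Set.Icc 0 1 ×ˢ Set.Icc 0 1))
    (hTxy₂₂ : ContinuousOn (fun p : ℝ × ℝ × ℝ × ℝ => Txy₂₂ p.1 p.2.1 p.2.2.1 p.2.2.2)
      (Set.Icc 0 1 ×ˢ Set.Icc 0 1 ×ˢ Set.Icc 0 1 ×ˢ Set.Icc 0 1))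
    -- boundary-matching condition at θ = x for the kernels
    (hbc : ∀ x ∈ Set.Icc (0:ℝ) 1, ∀ y ∈ Set.Icc (0:ℝ) 1, ∀ η ∈ Set.Icc (0:ℝ) 1,
      T₁₁ x y x η = T₂₁ x y x η ∧ T₁₂ x y x η = T₂₂ x y x η)
    -- boundary-matching condition at η = y for the x-derivatives of the kernels
    (hbcx : ∀ x ∈ Set.Icc (0:ℝ) 1, ∀ y ∈ Set.Icc (0:ℝ) 1, ∀ θ ∈ Set.Icc (0:ℝ) 1,
      Tx₁₁ x y θ y = Tx₁₂ x y θ y ∧ Tx₂₁ x y θ y = Tx₂₂ x y θ y)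
    (v : ℝ → ℝ → Fin n → ℝ)
    (hv : ContinuousOn (fun p : ℝ × ℝ => v p.1 p.2) (Set.Icc 0 1 ×ˢ Set.Icc 0 1))
    (x y : ℝ) (hx : x ∈ Set.Ioo (0:ℝ) 1) (hy : y ∈ Set.Ioo (0:ℝ) 1) :
    (∀ t ∈ Set.Icc (0:ℝ) 1,
      DifferentiableAt ℝ (fun s => quadOp T₁₁ T₁₂ T₂₁ T₂₂ v s t) x) ∧
    HasDerivAt (fun t => deriv (fun s => quadOp T₁₁ T₁₂ T₂₁ T₂₂ v s t) x)
      (quadOp Txy₁₁ Txy₁₂ Txy₂₁ Txy₂₂ v x y) y := by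
  have hxI : x ∈ Set.Icc (0:ℝ) 1 := Set.mem_Icc_of_Ioo hx
  have hyI : y ∈ Set.Icc (0:ℝ) 1 := Set.mem_Icc_of_Ioo hy
  -- continuity of the clamped integrands
  have cK11 := qker_continuous hT₁₁ hv
  have cK12 := qker_continuous hT₁₂ hv
  have cK21 := qker_continuous hT₂₁ hv
  have cK22 := qker_continuous hT₂₂ hv
  have cX11 := qker_continuous hTx₁₁ hv
  have cX12 := qker_continuous hTx₁₂ hv
  have cX21 := qker_continuous hTx₂₁ hv
  have cX22 := qker_continuous hTx₂₂ hv
  have cY11 := qker_continuous hTxy₁₁ hv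
  have cY12 := qker_continuous hTxy₁₂ hv
  have cY21 := qker_continuous hTxy₂₁ hv
  have cY22 := qker_continuous hTxy₂₂ hv
  -- pointwise derivative data in the first variable
  have d11 : ∀ x' ∈ Set.Ioo (0:ℝ) 1, ∀ y' ∈ Set.Icc (0:ℝ) 1, ∀ θ ∈ Set.Icc (0:ℝ) 1,
      ∀ η ∈ Set.Icc (0:ℝ) 1, HasDerivAt (fun s => T₁₁ s y' θ η) (Tx₁₁ x' y' θ η) x' :=
    fun x' hx' y' hy' θ hθ η hη =>
      (hdT₁₁ x' (Set.mem_Icc_of_Ioo hx') y' hy' θ hθ η hη).hasDerivAt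
        (Icc_mem_nhds hx'.1 hx'.2)
  have d12 : ∀ x' ∈ Set.Ioo (0:ℝ) 1, ∀ y' ∈ Set.Icc (0:ℝ) 1, ∀ θ ∈ Set.Icc (0:ℝ) 1,
      ∀ η ∈ Set.Icc (0:ℝ) 1, HasDerivAt (fun s => T₁₂ s y' θ η) (Tx₁₂ x' y' θ η) x' :=
    fun x' hx' y' hy' θ hθ η hη =>
      (hdT₁₂ x' (Set.mem_Icc_of_Ioo hx') y' hy' θ hθ η hη).hasDerivAt
        (Icc_mem_nhds hx'.1 hx'.2)
  have d21 : ∀ x' ∈ Set.Ioo (0:ℝ) 1, ∀ y' ∈ Set.Icc (0:ℝ) 1, ∀ θ ∈ Set.Icc (0:ℝ) 1,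
      ∀ η ∈ Set.Icc (0:ℝ) 1, HasDerivAt (fun s => T₂₁ s y' θ η) (Tx₂₁ x' y' θ η) x' :=
    fun x' hx' y' hy' θ hθ η hη =>
      (hdT₂₁ x' (Set.mem_Icc_of_Ioo hx') y' hy' θ hθ η hη).hasDerivAt
        (Icc_mem_nhds hx'.1 hx'.2)
  have d22 : ∀ x' ∈ Set.Ioo (0:ℝ) 1, ∀ y' ∈ Set.Icc (0:ℝ) 1, ∀ θ ∈ Set.Icc (0:ℝ) 1,
      ∀ η ∈ Set.Icc (0:ℝ) 1, HasDerivAt (fun s => T₂₂ s y' θ η) (Tx₂₂ x' y' θ η) x' :=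
    fun x' hx' y' hy' θ hθ η hη =>
      (hdT₂₂ x' (Set.mem_Icc_of_Ioo hx') y' hy' θ hθ η hη).hasDerivAt
        (Icc_mem_nhds hx'.1 hx'.2)
  -- pointwise derivative data of the x-derivatives in the second variable
  have e11 : ∀ x' ∈ Set.Icc (0:ℝ) 1, ∀ y' ∈ Set.Ioo (0:ℝ) 1, ∀ θ ∈ Set.Icc (0:ℝ) 1,
      ∀ η ∈ Set.Icc (0:ℝ) 1, HasDerivAt (fun t => Tx₁₁ x' t θ η) (Txy₁₁ x' y' θ η) y' :=
    fun x' hx' y' hy' θ hθ η hη =>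
      (hdxyT₁₁ x' hx' y' (Set.mem_Icc_of_Ioo hy') θ hθ η hη).hasDerivAt
        (Icc_mem_nhds hy'.1 hy'.2)
  have e12 : ∀ x' ∈ Set.Icc (0:ℝ) 1, ∀ y' ∈ Set.Ioo (0:ℝ) 1, ∀ θ ∈ Set.Icc (0:ℝ) 1,
      ∀ η ∈ Set.Icc (0:ℝ) 1, HasDerivAt (fun t => Tx₁₂ x' t θ η) (Txy₁₂ x' y' θ η) y' :=
    fun x' hx' y' hy' θ hθ η hη =>
      (hdxyT₁₂ x' hx' y' (Set.mem_Icc_of_Ioo hy') θ hθ η hη).hasDerivAt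
        (Icc_mem_nhds hy'.1 hy'.2)
  have e21 : ∀ x' ∈ Set.Icc (0:ℝ) 1, ∀ y' ∈ Set.Ioo (0:ℝ) 1, ∀ θ ∈ Set.Icc (0:ℝ) 1,
      ∀ η ∈ Set.Icc (0:ℝ) 1, HasDerivAt (fun t => Tx₂₁ x' t θ η) (Txy₂₁ x' y' θ η) y' :=
    fun x' hx' y' hy' θ hθ η hη =>
      (hdxyT₂₁ x' hx' y' (Set.mem_Icc_of_Ioo hy') θ hθ η hη).hasDerivAt
        (Icc_mem_nhds hy'.1 hy'.2)
  have e22 : ∀ x' ∈ Set.Icc (0:ℝ) 1, ∀ y' ∈ Set.Ioo (0:ℝ) 1, ∀ θ ∈ Set.Icc (0:ℝ) 1,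
      ∀ η ∈ Set.Icc (0:ℝ) 1, HasDerivAt (fun t => Tx₂₂ x' t θ η) (Txy₂₂ x' y' θ η) y' :=
    fun x' hx' y' hy' θ hθ η hη =>
      (hdxyT₂₂ x' hx' y' (Set.mem_Icc_of_Ioo hy') θ hθ η hη).hasDerivAt
        (Icc_mem_nhds hy'.1 hy'.2)
  -- continuity composition helpers
  have compA : ∀ (F : ℝ × ℝ × ℝ × ℝ → Fin n → ℝ), Continuous F → ∀ t : ℝ,
      Continuous fun q : ℝ × ℝ × ℝ => F (q.1, t, q.2.1, q.2.2) := fun F hF t =>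
    hF.comp (continuous_fst.prodMk (continuous_const.prodMk
      ((continuous_fst.comp continuous_snd).prodMk (continuous_snd.comp continuous_snd))))
  have compB : ∀ (F : ℝ × ℝ × ℝ × ℝ → Fin n → ℝ), Continuous F →
      Continuous fun q : ℝ × ℝ × ℝ => F (x, q.1, q.2.2, q.2.1) := fun F hF =>
    hF.comp (continuous_const.prodMk (continuous_fst.prodMk
      ((continuous_snd.comp continuous_snd).prodMk (continuous_fst.comp continuous_snd))))
  have compC : ∀ (F : ℝ × ℝ × ℝ × ℝ → Fin n → ℝ), Continuous F → ∀ t : ℝ,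
      Continuous fun q : ℝ × ℝ × ℝ => F (x, t, q.2.2, q.2.1) := fun F hF t =>
    hF.comp (continuous_const.prodMk (continuous_const.prodMk
      ((continuous_snd.comp continuous_snd).prodMk (continuous_fst.comp continuous_snd))))
  have swapcont : ∀ (F : ℝ × ℝ × ℝ × ℝ → Fin n → ℝ), Continuous F → ∀ t : ℝ,
      Continuous fun p : ℝ × ℝ => F (x, t, p.1, p.2) := fun F hF t =>
    hF.comp (continuous_const.prodMk (continuous_const.prodMk
      (continuous_fst.prodMk continuous_snd)))
  -- continuity of the parametrized inner integrals for the Tx kernels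
  have cbX11 := fun t : ℝ => my_cont_block (fun s θ η => qker Tx₁₁ v s t θ η) (compA _ cX11 t) 0 t
  have cbX12 := fun t : ℝ => my_cont_block (fun s θ η => qker Tx₁₂ v s t θ η) (compA _ cX12 t) t 1
  have cbX21 := fun t : ℝ => my_cont_block (fun s θ η => qker Tx₂₁ v s t θ η) (compA _ cX21 t) 0 t
  have cbX22 := fun t : ℝ => my_cont_block (fun s θ η => qker Tx₂₂ v s t θ η) (compA _ cX22 t) t 1
  -- quadrant blocks for the derivative in s
  have blk11 := fun t : ℝ => my_block (fun s θ η => qker T₁₁ v s t θ η)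
    (fun s θ η => qker Tx₁₁ v s t θ η) (compA _ cK11 t) (compA _ cX11 t)
    (fun s hs θ η => qker_hasDerivAt_fst d11 hs t θ η) 0 t
  have blk12 := fun t : ℝ => my_block (fun s θ η => qker T₁₂ v s t θ η)
    (fun s θ η => qker Tx₁₂ v s t θ η) (compA _ cK12 t) (compA _ cX12 t)
    (fun s hs θ η => qker_hasDerivAt_fst d12 hs t θ η) t 1
  have blk21 := fun t : ℝ => my_block (fun s θ η => qker T₂₁ v s t θ η)
    (fun s θ η => qker Tx₂₁ v s t θ η) (compA _ cK21 t) (compA _ cX21 t)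
    (fun s hs θ η => qker_hasDerivAt_fst d21 hs t θ η) 0 t
  have blk22 := fun t : ℝ => my_block (fun s θ η => qker T₂₂ v s t θ η)
    (fun s θ η => qker Tx₂₂ v s t θ η) (compA _ cK22 t) (compA _ cX22 t)
    (fun s hs θ η => qker_hasDerivAt_fst d22 hs t θ η) t 1
  -- Leibniz rule in s at x, for every t
  have hG : ∀ t : ℝ, HasDerivAt
      (fun s => (∫ θ in (0:ℝ)..s, (∫ η in (0:ℝ)..t, qker T₁₁ v s t θ η)
          + ∫ η in t..(1:ℝ), qker T₁₂ v s t θ η)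
        + ∫ θ in s..(1:ℝ), (∫ η in (0:ℝ)..t, qker T₂₁ v s t θ η)
          + ∫ η in t..(1:ℝ), qker T₂₂ v s t θ η)
      ((∫ θ in (0:ℝ)..x, (∫ η in (0:ℝ)..t, qker Tx₁₁ v x t θ η)
          + ∫ η in t..(1:ℝ), qker Tx₁₂ v x t θ η)
        + ∫ θ in x..(1:ℝ), (∫ η in (0:ℝ)..t, qker Tx₂₁ v x t θ η)
          + ∫ η in t..(1:ℝ), qker Tx₂₂ v x t θ η) x := by
    intro t
    refine my_main
      (fun s θ => (∫ η in (0:ℝ)..t, qker T₁₁ v s t θ η) + ∫ η in t..(1:ℝ), qker T₁₂ v s t θ η)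
      (fun s θ => (∫ η in (0:ℝ)..t, qker T₂₁ v s t θ η) + ∫ η in t..(1:ℝ), qker T₂₂ v s t θ η)
      (fun s θ => (∫ η in (0:ℝ)..t, qker Tx₁₁ v s t θ η) + ∫ η in t..(1:ℝ), qker Tx₁₂ v s t θ η)
      (fun s θ => (∫ η in (0:ℝ)..t, qker Tx₂₁ v s t θ η) + ∫ η in t..(1:ℝ), qker Tx₂₂ v s t θ η)
      ((blk11 t).1.add (blk12 t).1) ((blk21 t).1.add (blk22 t).1)
      ((cbX11 t).add (cbX12 t)) ((cbX21 t).add (cbX22 t))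
      (fun s hs θ => ((blk11 t).2 s hs θ).add ((blk12 t).2 s hs θ))
      (fun s hs θ => ((blk21 t).2 s hs θ).add ((blk22 t).2 s hs θ)) hx ?_
    have b1 : ∀ η : ℝ, qker T₁₁ v x t x η = qker T₂₁ v x t x η := by
      intro η
      simp only [qker, clamp_eq hxI]
      rw [(hbc x hxI (clamp t) (clamp_mem t) (clamp η) (clamp_mem η)).1]
    have b2 : ∀ η : ℝ, qker T₁₂ v x t x η = qker T₂₂ v x t x η := by
      intro η
      simp only [qker, clamp_eq hxI]
      rw [(hbc x hxI (clamp t) (clamp_mem t) (clamp η) (clamp_mem η)).2]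
    simp only [b1, b2]
  -- the operator agrees with its clamped version on the unit square
  have hAgree : ∀ s ∈ Set.Icc (0:ℝ) 1, ∀ t ∈ Set.Icc (0:ℝ) 1,
      quadOp T₁₁ T₁₂ T₂₁ T₂₂ v s t
        = (∫ θ in (0:ℝ)..s, (∫ η in (0:ℝ)..t, qker T₁₁ v s t θ η)
            + ∫ η in t..(1:ℝ), qker T₁₂ v s t θ η)
          + ∫ θ in s..(1:ℝ), (∫ η in (0:ℝ)..t, qker T₂₁ v s t θ η)
            + ∫ η in t..(1:ℝ), qker T₂₂ v s t θ η := by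
    intro s hs t ht
    have i11 : IntervalIntegrable (fun θ => ∫ η in (0:ℝ)..t, qker T₁₁ v s t θ η) volume 0 s :=
      ((blk11 t).1.comp (continuous_const.prodMk continuous_id)).intervalIntegrable 0 s
    have i12 : IntervalIntegrable (fun θ => ∫ η in t..(1:ℝ), qker T₁₂ v s t θ η) volume 0 s :=
      ((blk12 t).1.comp (continuous_const.prodMk continuous_id)).intervalIntegrable 0 s
    have i21 : IntervalIntegrable (fun θ => ∫ η in (0:ℝ)..t, qker T₂₁ v s t θ η) volume s 1 :=
      ((blk21 t).1.comp (continuous_const.prodMk continuous_id)).intervalIntegrable s 1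
    have i22 : IntervalIntegrable (fun θ => ∫ η in t..(1:ℝ), qker T₂₂ v s t θ η) volume s 1 :=
      ((blk22 t).1.comp (continuous_const.prodMk continuous_id)).intervalIntegrable s 1
    have q11 : (∫ θ in (0:ℝ)..s, ∫ η in (0:ℝ)..t, (T₁₁ s t θ η).mulVec (v θ η))
        = ∫ θ in (0:ℝ)..s, ∫ η in (0:ℝ)..t, qker T₁₁ v s t θ η := by
      refine intervalIntegral.integral_congr fun θ hθ => ?_
      have hθ' : θ ∈ Set.Icc (0:ℝ) 1 := by
        rw [Set.uIcc_of_le hs.1] at hθ; exact ⟨hθ.1, hθ.2.trans hs.2⟩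
      refine intervalIntegral.integral_congr fun η hη => ?_
      have hη' : η ∈ Set.Icc (0:ℝ) 1 := by
        rw [Set.uIcc_of_le ht.1] at hη; exact ⟨hη.1, hη.2.trans ht.2⟩
      exact (qker_eq _ _ hs ht hθ' hη').symm
    have q12 : (∫ θ in (0:ℝ)..s, ∫ η in t..(1:ℝ), (T₁₂ s t θ η).mulVec (v θ η))
        = ∫ θ in (0:ℝ)..s, ∫ η in t..(1:ℝ), qker T₁₂ v s t θ η := by
      refine intervalIntegral.integral_congr fun θ hθ => ?_
      have hθ' : θ ∈ Set.Icc (0:ℝ) 1 := by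
        rw [Set.uIcc_of_le hs.1] at hθ; exact ⟨hθ.1, hθ.2.trans hs.2⟩
      refine intervalIntegral.integral_congr fun η hη => ?_
      have hη' : η ∈ Set.Icc (0:ℝ) 1 := by
        rw [Set.uIcc_of_le ht.2] at hη; exact ⟨ht.1.trans hη.1, hη.2⟩
      exact (qker_eq _ _ hs ht hθ' hη').symm
    have q21 : (∫ θ in s..(1:ℝ), ∫ η in (0:ℝ)..t, (T₂₁ s t θ η).mulVec (v θ η))
        = ∫ θ in s..(1:ℝ), ∫ η in (0:ℝ)..t, qker T₂₁ v s t θ η := by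
      refine intervalIntegral.integral_congr fun θ hθ => ?_
      have hθ' : θ ∈ Set.Icc (0:ℝ) 1 := by
        rw [Set.uIcc_of_le hs.2] at hθ; exact ⟨hs.1.trans hθ.1, hθ.2⟩
      refine intervalIntegral.integral_congr fun η hη => ?_
      have hη' : η ∈ Set.Icc (0:ℝ) 1 := by
        rw [Set.uIcc_of_le ht.1] at hη; exact ⟨hη.1, hη.2.trans ht.2⟩
      exact (qker_eq _ _ hs ht hθ' hη').symm
    have q22 : (∫ θ in s..(1:ℝ), ∫ η in t..(1:ℝ), (T₂₂ s t θ η).mulVec (v θ η))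
        = ∫ θ in s..(1:ℝ), ∫ η in t..(1:ℝ), qker T₂₂ v s t θ η := by
      refine intervalIntegral.integral_congr fun θ hθ => ?_
      have hθ' : θ ∈ Set.Icc (0:ℝ) 1 := by
        rw [Set.uIcc_of_le hs.2] at hθ; exact ⟨hs.1.trans hθ.1, hθ.2⟩
      refine intervalIntegral.integral_congr fun η hη => ?_
      have hη' : η ∈ Set.Icc (0:ℝ) 1 := by
        rw [Set.uIcc_of_le ht.2] at hη; exact ⟨ht.1.trans hη.1, hη.2⟩
      exact (qker_eq _ _ hs ht hθ' hη').symm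
    rw [intervalIntegral.integral_add i11 i12, intervalIntegral.integral_add i21 i22]
    simp only [quadOp]
    rw [q11, q12, q21, q22]
    abel
  have hevs : ∀ t ∈ Set.Icc (0:ℝ) 1,
      (fun s => quadOp T₁₁ T₁₂ T₂₁ T₂₂ v s t) =ᶠ[nhds x]
      fun s => (∫ θ in (0:ℝ)..s, (∫ η in (0:ℝ)..t, qker T₁₁ v s t θ η)
          + ∫ η in t..(1:ℝ), qker T₁₂ v s t θ η)
        + ∫ θ in s..(1:ℝ), (∫ η in (0:ℝ)..t, qker T₂₁ v s t θ η)
          + ∫ η in t..(1:ℝ), qker T₂₂ v s t θ η := by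
    intro t ht
    filter_upwards [Ioo_mem_nhds hx.1 hx.2] with s hs
    exact hAgree s (Set.mem_Icc_of_Ioo hs) t ht
  have hD : ∀ t ∈ Set.Icc (0:ℝ) 1, deriv (fun s => quadOp T₁₁ T₁₂ T₂₁ T₂₂ v s t) x
      = (∫ θ in (0:ℝ)..x, (∫ η in (0:ℝ)..t, qker Tx₁₁ v x t θ η)
          + ∫ η in t..(1:ℝ), qker Tx₁₂ v x t θ η)
        + ∫ θ in x..(1:ℝ), (∫ η in (0:ℝ)..t, qker Tx₂₁ v x t θ η)
          + ∫ η in t..(1:ℝ), qker Tx₂₂ v x t θ η := by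
    intro t ht
    rw [(hevs t ht).deriv_eq, (hG t).deriv]
  -- Fubini swap of the derivative expression
  have hSwap : ∀ t : ℝ,
      (∫ θ in (0:ℝ)..x, (∫ η in (0:ℝ)..t, qker Tx₁₁ v x t θ η)
          + ∫ η in t..(1:ℝ), qker Tx₁₂ v x t θ η)
        + ∫ θ in x..(1:ℝ), (∫ η in (0:ℝ)..t, qker Tx₂₁ v x t θ η)
          + ∫ η in t..(1:ℝ), qker Tx₂₂ v x t θ η
      = (∫ η in (0:ℝ)..t, (∫ θ in (0:ℝ)..x, qker Tx₁₁ v x t θ η)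
          + ∫ θ in x..(1:ℝ), qker Tx₂₁ v x t θ η)
        + ∫ η in t..(1:ℝ), (∫ θ in (0:ℝ)..x, qker Tx₁₂ v x t θ η)
          + ∫ θ in x..(1:ℝ), qker Tx₂₂ v x t θ η := by
    intro t
    have j11 : IntervalIntegrable (fun θ => ∫ η in (0:ℝ)..t, qker Tx₁₁ v x t θ η) volume 0 x :=
      ((cbX11 t).comp (continuous_const.prodMk continuous_id)).intervalIntegrable 0 x
    have j12 : IntervalIntegrable (fun θ => ∫ η in t..(1:ℝ), qker Tx₁₂ v x t θ η) volume 0 x :=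
      ((cbX12 t).comp (continuous_const.prodMk continuous_id)).intervalIntegrable 0 x
    have j21 : IntervalIntegrable (fun θ => ∫ η in (0:ℝ)..t, qker Tx₂₁ v x t θ η) volume x 1 :=
      ((cbX21 t).comp (continuous_const.prodMk continuous_id)).intervalIntegrable x 1
    have j22 : IntervalIntegrable (fun θ => ∫ η in t..(1:ℝ), qker Tx₂₂ v x t θ η) volume x 1 :=
      ((cbX22 t).comp (continuous_const.prodMk continuous_id)).intervalIntegrable x 1
    have k11 : IntervalIntegrable (fun η => ∫ θ in (0:ℝ)..x, qker Tx₁₁ v x t θ η) volume 0 t :=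
      (((my_cont_block (fun a b θ => qker Tx₁₁ v x t θ b) (compC _ cX11 t) 0 x)).comp
        ((continuous_const : Continuous fun _ : ℝ => (0:ℝ)).prodMk continuous_id)).intervalIntegrable 0 t
    have k21 : IntervalIntegrable (fun η => ∫ θ in x..(1:ℝ), qker Tx₂₁ v x t θ η) volume 0 t :=
      (((my_cont_block (fun a b θ => qker Tx₂₁ v x t θ b) (compC _ cX21 t) x 1)).comp
        ((continuous_const : Continuous fun _ : ℝ => (0:ℝ)).prodMk continuous_id)).intervalIntegrable 0 t
    have k12 : IntervalIntegrable (fun η => ∫ θ in (0:ℝ)..x, qker Tx₁₂ v x t θ η) volume t 1 :=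
      (((my_cont_block (fun a b θ => qker Tx₁₂ v x t θ b) (compC _ cX12 t) 0 x)).comp
        ((continuous_const : Continuous fun _ : ℝ => (0:ℝ)).prodMk continuous_id)).intervalIntegrable t 1
    have k22 : IntervalIntegrable (fun η => ∫ θ in x..(1:ℝ), qker Tx₂₂ v x t θ η) volume t 1 :=
      (((my_cont_block (fun a b θ => qker Tx₂₂ v x t θ b) (compC _ cX22 t) x 1)).comp
        ((continuous_const : Continuous fun _ : ℝ => (0:ℝ)).prodMk continuous_id)).intervalIntegrable t 1
    rw [intervalIntegral.integral_add j11 j12, intervalIntegral.integral_add j21 j22,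
      intervalIntegral.integral_add k11 k21, intervalIntegral.integral_add k12 k22,
      my_intervalIntegral_swap (fun θ η => qker Tx₁₁ v x t θ η) (swapcont _ cX11 t) 0 x 0 t,
      my_intervalIntegral_swap (fun θ η => qker Tx₁₂ v x t θ η) (swapcont _ cX12 t) 0 x t 1,
      my_intervalIntegral_swap (fun θ η => qker Tx₂₁ v x t θ η) (swapcont _ cX21 t) x 1 0 t,
      my_intervalIntegral_swap (fun θ η => qker Tx₂₂ v x t θ η) (swapcont _ cX22 t) x 1 t 1]
    abel
  -- quadrant blocks for the derivative in t
  have blkR11 := my_block (fun t η θ => qker Tx₁₁ v x t θ η) (fun t η θ => qker Txy₁₁ v x t θ η)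
    (compB _ cX11) (compB _ cY11) (fun t ht η θ => qker_hasDerivAt_snd e11 ht x θ η) 0 x
  have blkR21 := my_block (fun t η θ => qker Tx₂₁ v x t θ η) (fun t η θ => qker Txy₂₁ v x t θ η)
    (compB _ cX21) (compB _ cY21) (fun t ht η θ => qker_hasDerivAt_snd e21 ht x θ η) x 1
  have blkR12 := my_block (fun t η θ => qker Tx₁₂ v x t θ η) (fun t η θ => qker Txy₁₂ v x t θ η)
    (compB _ cX12) (compB _ cY12) (fun t ht η θ => qker_hasDerivAt_snd e12 ht x θ η) 0 x
  have blkR22 := my_block (fun t η θ => qker Tx₂₂ v x t θ η) (fun t η θ => qker Txy₂₂ v x t θ η)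
    (compB _ cX22) (compB _ cY22) (fun t ht η θ => qker_hasDerivAt_snd e22 ht x θ η) x 1
  -- Leibniz rule in t at y
  have hMain2 : HasDerivAt
      (fun t => (∫ η in (0:ℝ)..t, (∫ θ in (0:ℝ)..x, qker Tx₁₁ v x t θ η)
          + ∫ θ in x..(1:ℝ), qker Tx₂₁ v x t θ η)
        + ∫ η in t..(1:ℝ), (∫ θ in (0:ℝ)..x, qker Tx₁₂ v x t θ η)
          + ∫ θ in x..(1:ℝ), qker Tx₂₂ v x t θ η)
      ((∫ η in (0:ℝ)..y, (∫ θ in (0:ℝ)..x, qker Txy₁₁ v x y θ η)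
          + ∫ θ in x..(1:ℝ), qker Txy₂₁ v x y θ η)
        + ∫ η in y..(1:ℝ), (∫ θ in (0:ℝ)..x, qker Txy₁₂ v x y θ η)
          + ∫ θ in x..(1:ℝ), qker Txy₂₂ v x y θ η) y := by
    refine my_main
      (fun t η => (∫ θ in (0:ℝ)..x, qker Tx₁₁ v x t θ η) + ∫ θ in x..(1:ℝ), qker Tx₂₁ v x t θ η)
      (fun t η => (∫ θ in (0:ℝ)..x, qker Tx₁₂ v x t θ η) + ∫ θ in x..(1:ℝ), qker Tx₂₂ v x t θ η)
      (fun t η => (∫ θ in (0:ℝ)..x, qker Txy₁₁ v x t θ η) + ∫ θ in x..(1:ℝ), qker Txy₂₁ v x t θ η)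
      (fun t η => (∫ θ in (0:ℝ)..x, qker Txy₁₂ v x t θ η) + ∫ θ in x..(1:ℝ), qker Txy₂₂ v x t θ η)
      (blkR11.1.add blkR21.1) (blkR12.1.add blkR22.1)
      ((my_cont_block (fun a b c => qker Txy₁₁ v x a c b) (compB _ cY11) 0 x).add (my_cont_block (fun a b c => qker Txy₂₁ v x a c b) (compB _ cY21) x 1))
      ((my_cont_block (fun a b c => qker Txy₁₂ v x a c b) (compB _ cY12) 0 x).add (my_cont_block (fun a b c => qker Txy₂₂ v x a c b) (compB _ cY22) x 1))
      (fun t ht η => (blkR11.2 t ht η).add (blkR21.2 t ht η))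
      (fun t ht η => (blkR12.2 t ht η).add (blkR22.2 t ht η)) hy ?_
    have b1 : ∀ θ : ℝ, qker Tx₁₁ v x y θ y = qker Tx₁₂ v x y θ y := by
      intro θ
      simp only [qker, clamp_eq hxI, clamp_eq hyI]
      rw [(hbcx x hxI y hyI (clamp θ) (clamp_mem θ)).1]
    have b2 : ∀ θ : ℝ, qker Tx₂₁ v x y θ y = qker Tx₂₂ v x y θ y := by
      intro θ
      simp only [qker, clamp_eq hxI, clamp_eq hyI]
      rw [(hbcx x hxI y hyI (clamp θ) (clamp_mem θ)).2]
    simp only [b1, b2]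
  -- the value of the derivative is the quadrant operator with the mixed kernels
  have hFinal :
      (∫ η in (0:ℝ)..y, (∫ θ in (0:ℝ)..x, qker Txy₁₁ v x y θ η)
          + ∫ θ in x..(1:ℝ), qker Txy₂₁ v x y θ η)
        + ∫ η in y..(1:ℝ), (∫ θ in (0:ℝ)..x, qker Txy₁₂ v x y θ η)
          + ∫ θ in x..(1:ℝ), qker Txy₂₂ v x y θ η
      = quadOp Txy₁₁ Txy₁₂ Txy₂₁ Txy₂₂ v x y := by
    have m11 : IntervalIntegrable (fun η => ∫ θ in (0:ℝ)..x, qker Txy₁₁ v x y θ η) volume 0 y :=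
      (((my_cont_block (fun a b θ => qker Txy₁₁ v x y θ b) (compC _ cY11 y) 0 x)).comp
        ((continuous_const : Continuous fun _ : ℝ => (0:ℝ)).prodMk continuous_id)).intervalIntegrable 0 y
    have m21 : IntervalIntegrable (fun η => ∫ θ in x..(1:ℝ), qker Txy₂₁ v x y θ η) volume 0 y :=
      (((my_cont_block (fun a b θ => qker Txy₂₁ v x y θ b) (compC _ cY21 y) x 1)).comp
        ((continuous_const : Continuous fun _ : ℝ => (0:ℝ)).prodMk continuous_id)).intervalIntegrable 0 y
    have m12 : IntervalIntegrable (fun η => ∫ θ in (0:ℝ)..x, qker Txy₁₂ v x y θ η) volume y 1 :=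
      (((my_cont_block (fun a b θ => qker Txy₁₂ v x y θ b) (compC _ cY12 y) 0 x)).comp
        ((continuous_const : Continuous fun _ : ℝ => (0:ℝ)).prodMk continuous_id)).intervalIntegrable y 1
    have m22 : IntervalIntegrable (fun η => ∫ θ in x..(1:ℝ), qker Txy₂₂ v x y θ η) volume y 1 :=
      (((my_cont_block (fun a b θ => qker Txy₂₂ v x y θ b) (compC _ cY22 y) x 1)).comp
        ((continuous_const : Continuous fun _ : ℝ => (0:ℝ)).prodMk continuous_id)).intervalIntegrable y 1
    have r11 : (∫ θ in (0:ℝ)..x, ∫ η in (0:ℝ)..y, (Txy₁₁ x y θ η).mulVec (v θ η))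
        = ∫ θ in (0:ℝ)..x, ∫ η in (0:ℝ)..y, qker Txy₁₁ v x y θ η := by
      refine intervalIntegral.integral_congr fun θ hθ => ?_
      have hθ' : θ ∈ Set.Icc (0:ℝ) 1 := by
        rw [Set.uIcc_of_le hxI.1] at hθ; exact ⟨hθ.1, hθ.2.trans hxI.2⟩
      refine intervalIntegral.integral_congr fun η hη => ?_
      have hη' : η ∈ Set.Icc (0:ℝ) 1 := by
        rw [Set.uIcc_of_le hyI.1] at hη; exact ⟨hη.1, hη.2.trans hyI.2⟩
      exact (qker_eq _ _ hxI hyI hθ' hη').symm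
    have r21 : (∫ θ in x..(1:ℝ), ∫ η in (0:ℝ)..y, (Txy₂₁ x y θ η).mulVec (v θ η))
        = ∫ θ in x..(1:ℝ), ∫ η in (0:ℝ)..y, qker Txy₂₁ v x y θ η := by
      refine intervalIntegral.integral_congr fun θ hθ => ?_
      have hθ' : θ ∈ Set.Icc (0:ℝ) 1 := by
        rw [Set.uIcc_of_le hxI.2] at hθ; exact ⟨hxI.1.trans hθ.1, hθ.2⟩
      refine intervalIntegral.integral_congr fun η hη => ?_
      have hη' : η ∈ Set.Icc (0:ℝ) 1 := by
        rw [Set.uIcc_of_le hyI.1] at hη; exact ⟨hη.1, hη.2.trans hyI.2⟩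
      exact (qker_eq _ _ hxI hyI hθ' hη').symm
    have r12 : (∫ θ in (0:ℝ)..x, ∫ η in y..(1:ℝ), (Txy₁₂ x y θ η).mulVec (v θ η))
        = ∫ θ in (0:ℝ)..x, ∫ η in y..(1:ℝ), qker Txy₁₂ v x y θ η := by
      refine intervalIntegral.integral_congr fun θ hθ => ?_
      have hθ' : θ ∈ Set.Icc (0:ℝ) 1 := by
        rw [Set.uIcc_of_le hxI.1] at hθ; exact ⟨hθ.1, hθ.2.trans hxI.2⟩
      refine intervalIntegral.integral_congr fun η hη => ?_
      have hη' : η ∈ Set.Icc (0:ℝ) 1 := by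
        rw [Set.uIcc_of_le hyI.2] at hη; exact ⟨hyI.1.trans hη.1, hη.2⟩
      exact (qker_eq _ _ hxI hyI hθ' hη').symm
    have r22 : (∫ θ in x..(1:ℝ), ∫ η in y..(1:ℝ), (Txy₂₂ x y θ η).mulVec (v θ η))
        = ∫ θ in x..(1:ℝ), ∫ η in y..(1:ℝ), qker Txy₂₂ v x y θ η := by
      refine intervalIntegral.integral_congr fun θ hθ => ?_
      have hθ' : θ ∈ Set.Icc (0:ℝ) 1 := by
        rw [Set.uIcc_of_le hxI.2] at hθ; exact ⟨hxI.1.trans hθ.1, hθ.2⟩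
      refine intervalIntegral.integral_congr fun η hη => ?_
      have hη' : η ∈ Set.Icc (0:ℝ) 1 := by
        rw [Set.uIcc_of_le hyI.2] at hη; exact ⟨hyI.1.trans hη.1, hη.2⟩
      exact (qker_eq _ _ hxI hyI hθ' hη').symm
    rw [intervalIntegral.integral_add m11 m21, intervalIntegral.integral_add m12 m22,
      ← my_intervalIntegral_swap (fun θ η => qker Txy₁₁ v x y θ η) (swapcont _ cY11 y) 0 x 0 y,
      ← my_intervalIntegral_swap (fun θ η => qker Txy₂₁ v x y θ η) (swapcont _ cY21 y) x 1 0 y,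
      ← my_intervalIntegral_swap (fun θ η => qker Txy₁₂ v x y θ η) (swapcont _ cY12 y) 0 x y 1,
      ← my_intervalIntegral_swap (fun θ η => qker Txy₂₂ v x y θ η) (swapcont _ cY22 y) x 1 y 1]
    simp only [quadOp]
    rw [r11, r21, r12, r22]
    abel
  have hev2 : (fun t => deriv (fun s => quadOp T₁₁ T₁₂ T₂₁ T₂₂ v s t) x) =ᶠ[nhds y]
      fun t => (∫ η in (0:ℝ)..t, (∫ θ in (0:ℝ)..x, qker Tx₁₁ v x t θ η)
          + ∫ θ in x..(1:ℝ), qker Tx₂₁ v x t θ η)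
        + ∫ η in t..(1:ℝ), (∫ θ in (0:ℝ)..x, qker Tx₁₂ v x t θ η)
          + ∫ θ in x..(1:ℝ), qker Tx₂₂ v x t θ η := by
    filter_upwards [Ioo_mem_nhds hy.1 hy.2] with t ht
    rw [hD t (Set.mem_Icc_of_Ioo ht), hSwap t]
  refine ⟨fun t ht => ((hevs t ht).differentiableAt_iff).2 (hG t).differentiableAt, ?_⟩
  rw [← hFinal]
  exact hMain2.congr_of_eventuallyEq hev2
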